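/- Let f : Ω → ℂ be a nonvanishing scalar C¹ function on an open set Ω ⊆ ℝ³, and let W = W₀ + W₁e₁ + W₂e₂ + W₃e₃ : Ω → ℍ(ℂ) be any C¹ function. Set φ₀ = W₀/f and φ_k = fW_k for k = 1, 2, 3, and let F₀ = f, F_k = e_k/f. Then V̄W = Σ_{α=0}^{3} F_α·(Dφ_α), where the products are quaternionic products taken in the written order. -/

import Mathlib

open Quaternion

noncomputable section

/-- Points of ℝ³. -/
abbrev P3 := EuclideanSpace ℝ (Fin 3)

/-- Partial derivative ∂ₖ of a complex-valued function on ℝ³. -/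
def pd (k : Fin 3) (F : P3 → ℂ) : P3 → ℂ :=
  fun p => fderiv ℝ F p (EuclideanSpace.single k 1)

/-- The Laplacian Δ = ∂₁² + ∂₂² + ∂₃². -/
def lap3 (F : P3 → ℂ) : P3 → ℂ := fun p => ∑ k : Fin 3, pd k (pd k F) p

/-- Embedding of a complex scalar as a quaternion. -/
def qC (z : ℂ) : ℍ[ℂ] := ⟨z, 0, 0, 0⟩

/-- The quaternionic imaginary units e₁, e₂, e₃. -/
def qe : Fin 3 → ℍ[ℂ] := ![⟨0,1,0,0⟩, ⟨0,0,1,0⟩, ⟨0,0,0,1⟩]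

/-- The eₖ-components of a quaternion. -/
def qcomp : Fin 3 → ℍ[ℂ] → ℂ := ![QuaternionAlgebra.imI, QuaternionAlgebra.imJ, QuaternionAlgebra.imK]

/-- Quaternionic conjugation C_H. -/
def CH (q : ℍ[ℂ]) : ℍ[ℂ] := ⟨q.re, -q.imI, -q.imJ, -q.imK⟩

/-- Componentwise partial derivative of a quaternion-valued function. -/
def pdq (k : Fin 3) (W : P3 → ℍ[ℂ]) : P3 → ℍ[ℂ] :=
  fun p => ⟨pd k (fun x => (W x).re) p, pd k (fun x => (W x).imI) p,
            pd k (fun x => (W x).imJ) p, pd k (fun x => (W x).imK) p⟩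

/-- The Dirac (Moisil–Theodorescu) operator D Q = Σₖ eₖ ∂ₖ Q. -/
def Dq (W : P3 → ℍ[ℂ]) : P3 → ℍ[ℂ] := fun p => ∑ k : Fin 3, qe k * pdq k W p

/-- The right Dirac operator Dᵣ Q = Σₖ (∂ₖ Q) eₖ. -/
def Drq (W : P3 → ℍ[ℂ]) : P3 → ℍ[ℂ] := fun p => ∑ k : Fin 3, pdq k W p * qe k

/-- Gradient of a scalar function viewed as a purely vectorial quaternion. -/
def gradq (F : P3 → ℂ) : P3 → ℍ[ℂ] := fun p => ⟨0, pd 0 F p, pd 1 F p, pd 2 F p⟩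

/-- Divergence of (the vector part of) a quaternion-valued function. -/
def divq (W : P3 → ℍ[ℂ]) : P3 → ℂ :=
  fun p => pd 0 (fun x => (W x).imI) p + pd 1 (fun x => (W x).imJ) p + pd 2 (fun x => (W x).imK) p

/-- Rotor (curl) of (the vector part of) a quaternion-valued function. -/
def rotq (W : P3 → ℍ[ℂ]) : P3 → ℍ[ℂ] :=
  fun p => ⟨0,
    pd 1 (fun x => (W x).imK) p - pd 2 (fun x => (W x).imJ) p,
    pd 2 (fun x => (W x).imI) p - pd 0 (fun x => (W x).imK) p,
    pd 0 (fun x => (W x).imJ) p - pd 1 (fun x => (W x).imI) p⟩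

/-- Cross product of the vector parts of two quaternions. -/
def crossq (u v : ℍ[ℂ]) : ℍ[ℂ] :=
  ⟨0, u.imJ * v.imK - u.imK * v.imJ, u.imK * v.imI - u.imI * v.imK, u.imI * v.imJ - u.imJ * v.imI⟩

/-- Bilinear scalar product of the vector parts of two quaternions. -/
def dotq (u v : ℍ[ℂ]) : ℂ := u.imI * v.imI + u.imJ * v.imJ + u.imK * v.imK

/-- `Cⁿ` smoothness of a quaternion-valued function on a set, componentwise. -/
def QContDiffOn (n : ℕ) (W : P3 → ℍ[ℂ]) (Ω : Set P3) : Prop :=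
  ContDiffOn ℝ n (fun p => (W p).re) Ω ∧ ContDiffOn ℝ n (fun p => (W p).imI) Ω ∧
  ContDiffOn ℝ n (fun p => (W p).imJ) Ω ∧ ContDiffOn ℝ n (fun p => (W p).imK) Ω

/-- The pure-quaternion Df/f built from a nonvanishing scalar function f. -/
def DfF (f : P3 → ℂ) : P3 → ℍ[ℂ] := fun p => (f p)⁻¹ • gradq f p

/-! The product and quotient rules give `f · D(W₀/f) = DW₀ − W₀ · Df/f` and
`(eₖ/f) · D(f Wₖ) = eₖ · DWₖ + Wₖ eₖ · Df/f`. On the other side, since the scalar derivatives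
commute with the units, `D_r W = DW₀ + Σₖ eₖ · DWₖ`, and `C_H W = W₀ − Σₖ Wₖ eₖ`; so
`D_r W − C_H W · Df/f` expands to the same four kinds of terms. -/

@[simp] lemma qe_zero : qe 0 = ⟨0, 1, 0, 0⟩ := rfl
@[simp] lemma qe_one : qe 1 = ⟨0, 0, 1, 0⟩ := rfl
@[simp] lemma qe_two : qe 2 = ⟨0, 0, 0, 1⟩ := rfl
@[simp] lemma qcomp_zero (q : ℍ[ℂ]) : qcomp 0 q = q.imI := rfl
@[simp] lemma qcomp_one (q : ℍ[ℂ]) : qcomp 1 q = q.imJ := rfl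
@[simp] lemma qcomp_two (q : ℍ[ℂ]) : qcomp 2 q = q.imK := rfl

@[simp] lemma gradq_re (g : P3 → ℂ) (p : P3) : (gradq g p).re = 0 := rfl
@[simp] lemma gradq_imI (g : P3 → ℂ) (p : P3) : (gradq g p).imI = pd 0 g p := rfl
@[simp] lemma gradq_imJ (g : P3 → ℂ) (p : P3) : (gradq g p).imJ = pd 1 g p := rfl
@[simp] lemma gradq_imK (g : P3 → ℂ) (p : P3) : (gradq g p).imK = pd 2 g p := rfl

lemma qC_mul (z : ℂ) (q : ℍ[ℂ]) : qC z * q = z • q :=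
  Quaternion.coe_mul_eq_smul z q

lemma CH_eq_star (q : ℍ[ℂ]) : CH q = star q := by
  ext <;> simp [CH]

-- `smul_mul_assoc` does not fire here: instance search fails on `IsScalarTower ℂ ℍ[ℂ] ℍ[ℂ]`
-- for the `SMul` instance of `ℍ[ℂ]`.
lemma smul_mul_assoc_quaternion (z : ℂ) (a b : ℍ[ℂ]) : z • a * b = z • (a * b) :=
  Algebra.smul_mul_assoc z a b

lemma mul_smul_comm_quaternion (z : ℂ) (a b : ℍ[ℂ]) : a * z • b = z • (a * b) :=
  Algebra.mul_smul_comm z a b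

lemma star_eq_qC_sub_sum (q : ℍ[ℂ]) : star q = qC q.re - ∑ k, qcomp k q • qe k := by
  ext <;> simp only [Fin.sum_univ_three, Quaternion.re_sub, Quaternion.imI_sub, Quaternion.imJ_sub,
    Quaternion.imK_sub, Quaternion.re_add, Quaternion.imI_add, Quaternion.imJ_add, Quaternion.imK_add,
    Quaternion.re_smul, Quaternion.imI_smul, Quaternion.imJ_smul, Quaternion.imK_smul] <;>
    simp [qC]

lemma Drq_eq (W : P3 → ℍ[ℂ]) (p : P3) :
    Drq W p = gradq (fun x => (W x).re) p + ∑ k, qe k * gradq (fun x => qcomp k (W x)) p := by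
  ext <;> simp only [Drq, Fin.sum_univ_three, Quaternion.re_add, Quaternion.imI_add, Quaternion.imJ_add,
    Quaternion.imK_add, Quaternion.re_mul, Quaternion.imI_mul, Quaternion.imJ_mul, Quaternion.imK_mul] <;>
    simp [pdq] <;> ring

lemma Drq_sub_CH_mul (W : P3 → ℍ[ℂ]) (p : P3) (Q : ℍ[ℂ]) :
    Drq W p - CH (W p) * Q
      = gradq (fun x => (W x).re) p - (W p).re • Q
          + ∑ k, (qe k * gradq (fun x => qcomp k (W x)) p + qcomp k (W p) • (qe k * Q)) := by
  rw [Drq_eq, CH_eq_star, star_eq_qC_sub_sum, sub_mul, qC_mul, Finset.sum_mul,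
    Finset.sum_add_distrib]
  simp only [smul_mul_assoc_quaternion]
  abel

lemma pd_mul {g h : P3 → ℂ} {p : P3} (k : Fin 3)
    (hg : DifferentiableAt ℝ g p) (hh : DifferentiableAt ℝ h p) :
    pd k (fun x => g x * h x) p = g p * pd k h p + h p * pd k g p := by
  simp [pd, fderiv_fun_mul hg hh]

lemma pd_inv {g : P3 → ℂ} {p : P3} (k : Fin 3) (hg : DifferentiableAt ℝ g p) (hg0 : g p ≠ 0) :
    pd k (fun x => (g x)⁻¹) p = -(pd k g p / g p ^ 2) := by
  have hinv := ((hasFDerivAt_inv' (𝕜 := ℝ) hg0).comp p hg.hasFDerivAt).fderiv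
  simp only [pd, Function.comp_def] at hinv ⊢
  rw [hinv]
  simp only [ContinuousLinearMap.neg_comp, neg_apply, ContinuousLinearMap.comp_apply,
    ContinuousLinearMap.mulLeftRight_apply, neg_inj]
  ring

lemma pd_div {g h : P3 → ℂ} {p : P3} (k : Fin 3)
    (hg : DifferentiableAt ℝ g p) (hh : DifferentiableAt ℝ h p) (hh0 : h p ≠ 0) :
    pd k (fun x => g x / h x) p = (h p)⁻¹ * pd k g p - g p / h p ^ 2 * pd k h p := by
  simp only [div_eq_mul_inv]
  rw [pd_mul k hg (hh.fun_inv hh0), pd_inv k hh hh0]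
  ring

lemma gradq_mul {g h : P3 → ℂ} {p : P3}
    (hg : DifferentiableAt ℝ g p) (hh : DifferentiableAt ℝ h p) :
    gradq (fun x => g x * h x) p = g p • gradq h p + h p • gradq g p := by
  ext <;> simp [pd_mul _ hg hh]

lemma gradq_div {g h : P3 → ℂ} {p : P3}
    (hg : DifferentiableAt ℝ g p) (hh : DifferentiableAt ℝ h p) (hh0 : h p ≠ 0) :
    gradq (fun x => g x / h x) p = (h p)⁻¹ • gradq g p - (g p / h p ^ 2) • gradq h p := by
  ext <;> simp [pd_div _ hg hh hh0]

lemma qC_mul_gradq_div {g h : P3 → ℂ} {p : P3}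
    (hg : DifferentiableAt ℝ g p) (hh : DifferentiableAt ℝ h p) (hh0 : h p ≠ 0) :
    qC (h p) * gradq (fun x => g x / h x) p = gradq g p - g p • DfF h p := by
  rw [qC_mul, gradq_div hg hh hh0, DfF]
  match_scalars <;> field_simp

lemma inv_smul_mul_gradq_mul {h g : P3 → ℂ} {p : P3} (q : ℍ[ℂ])
    (hh : DifferentiableAt ℝ h p) (hg : DifferentiableAt ℝ g p) (hh0 : h p ≠ 0) :
    ((h p)⁻¹ • q) * gradq (fun x => h x * g x) p = q * gradq g p + g p • (q * DfF h p) := by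
  rw [gradq_mul hh hg, DfF]
  simp only [mul_add, smul_mul_assoc_quaternion, mul_smul_comm_quaternion]
  match_scalars <;> field_simp

/-- representation of the derivative,
    V̄W = Σ_α Fα·(Dφα) with φ₀ = W₀/f, φₖ = fWₖ, F₀ = f, Fₖ = eₖ/f. -/
theorem statement9 (Ω : Set P3) (hΩ : IsOpen Ω)
    (f : P3 → ℂ) (hf : ContDiffOn ℝ 1 f Ω) (hf0 : ∀ p ∈ Ω, f p ≠ 0)
    (W : P3 → ℍ[ℂ]) (hW : QContDiffOn 1 W Ω) :
    ∀ p ∈ Ω,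
      Drq W p - CH (W p) * DfF f p
        = qC (f p) * gradq (fun x => (W x).re / f x) p
            + ∑ k : Fin 3, ((f p)⁻¹ • qe k) * gradq (fun x => f x * qcomp k (W x)) p := by
  intro p hp
  have hdiff {g : P3 → ℂ} (hg : ContDiffOn ℝ 1 g Ω) : DifferentiableAt ℝ g p :=
    (hg.contDiffAt (hΩ.mem_nhds hp)).differentiableAt one_ne_zero
  obtain ⟨hW₀, hW₁, hW₂, hW₃⟩ := hW
  have hWk (k : Fin 3) : DifferentiableAt ℝ (fun x => qcomp k (W x)) p := by
    fin_cases k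
    exacts [hdiff hW₁, hdiff hW₂, hdiff hW₃]
  rw [Drq_sub_CH_mul, qC_mul_gradq_div (hdiff hW₀) (hdiff hf) (hf0 p hp)]
  congr 1
  exact Finset.sum_congr rfl fun k _ =>
    (inv_smul_mul_gradq_mul (qe k) (hdiff hf) (hWk k) (hf0 p hp)).symm
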